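/- arXiv:1705.07559 — 4 statements merged into one kernel-verified Lean document; each statement's English description precedes it below -/
import Mathlib

section
/- Let G be a group, A a commutative group, (E, i, p) a central extension of G by A, s : G → E a set-theoretic section of p with s(1) = 1, and z the normalized 2-cocycle determined by i(z(g₁,g₂)) = s(g₁)s(g₂)s(g₁g₂)⁻¹. Then the map (g,a) ↦ s(g)·i(a) is an equivalence of central extensions from Inc(z) to E. In particular, every central extension of G by A is equivalent to Inc(z) for some normalized 2-cocycle z. -/
/-- A central extension of a group `G` by a commutative group `A`:
`i : A →* E` is injective with central image, `p : E →* G` is surjective,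
and `ker p = range i`. -/
class IsCentralExtension {A E G : Type*} [CommGroup A] [Group E] [Group G]
    (i : A →* E) (p : E →* G) : Prop where
  inj : Function.Injective i
  mem_center : ∀ a : A, i a ∈ Subgroup.center E
  surj : Function.Surjective p
  ker_eq_range : MonoidHom.ker p = MonoidHom.range i

/-- A normalized (measurable is automatic in the discrete case) 2-cocycle on `G`
valued in the trivial `G`-module `A`. -/
structure NormalizedTwoCocycle (G A : Type*) [Group G] [CommGroup A] where
  z : G → G → A
  z_one_right : ∀ g : G, z g 1 = 1
  z_one_left : ∀ g : G, z 1 g = 1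
  cocycle : ∀ g₁ g₂ g₃ : G, z (g₁ * g₂) g₃ * z g₁ g₂ = z g₁ (g₂ * g₃) * z g₂ g₃

/-- The underlying set `G × A` of the incarnated extension `Inc(z)`. -/
@[ext] structure Inc {G A : Type*} [Group G] [CommGroup A]
    (z : NormalizedTwoCocycle G A) where
  g : G
  a : A

/-- The group structure on `Inc(z)`: `(g₁,a₁)·(g₂,a₂) = (g₁g₂, a₁a₂·z(g₁,g₂))`,
with identity `(1,1)`. -/
instance instGroupInc {G A : Type*} [Group G] [CommGroup A] (z : NormalizedTwoCocycle G A) :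
    Group (Inc z) where
  mul x y := ⟨x.g * y.g, x.a * y.a * z.z x.g y.g⟩
  one := ⟨1, 1⟩
  inv x := ⟨x.g⁻¹, x.a⁻¹ * (z.z x.g⁻¹ x.g)⁻¹⟩
  mul_assoc x y w := by
    refine Inc.ext (mul_assoc _ _ _) ?_
    show (x.a * y.a * z.z x.g y.g) * w.a * z.z (x.g * y.g) w.g
        = x.a * (y.a * w.a * z.z y.g w.g) * z.z x.g (y.g * w.g)
    have h := z.cocycle x.g y.g w.g
    calc (x.a * y.a * z.z x.g y.g) * w.a * z.z (x.g * y.g) w.g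
        = (x.a * y.a * w.a) * (z.z (x.g * y.g) w.g * z.z x.g y.g) := by
          simp [mul_assoc, mul_comm, mul_left_comm]
      _ = (x.a * y.a * w.a) * (z.z x.g (y.g * w.g) * z.z y.g w.g) := by rw [h]
      _ = x.a * (y.a * w.a * z.z y.g w.g) * z.z x.g (y.g * w.g) := by
          simp [mul_assoc, mul_comm, mul_left_comm]
  one_mul x := by
    refine Inc.ext (one_mul _) ?_
    show 1 * x.a * z.z 1 x.g = x.a
    rw [z.z_one_left, one_mul, mul_one]
  mul_one x := by
    refine Inc.ext (mul_one _) ?_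
    show x.a * 1 * z.z x.g 1 = x.a
    rw [z.z_one_right, mul_one, mul_one]
  inv_mul_cancel x := by
    refine Inc.ext (inv_mul_cancel _) ?_
    show (x.a⁻¹ * (z.z x.g⁻¹ x.g)⁻¹) * x.a * z.z x.g⁻¹ x.g = 1
    calc (x.a⁻¹ * (z.z x.g⁻¹ x.g)⁻¹) * x.a * z.z x.g⁻¹ x.g
        = (x.a⁻¹ * x.a) * ((z.z x.g⁻¹ x.g)⁻¹ * z.z x.g⁻¹ x.g) := by
          simp [mul_assoc, mul_comm, mul_left_comm]
      _ = 1 := by simp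

/-- The structure map `i(a) = (1,a)` of the incarnated extension `Inc(z)`. -/
def incI {G A : Type*} [Group G] [CommGroup A] (z : NormalizedTwoCocycle G A) :
    A →* Inc z where
  toFun a := ⟨1, a⟩
  map_one' := rfl
  map_mul' a b := by
    refine Inc.ext ?_ ?_
    · show (1 : G) = 1 * 1
      rw [one_mul]
    · show a * b = a * b * z.z 1 1
      rw [z.z_one_left, mul_one]

/-- The structure map `p(g,a) = g` of the incarnated extension `Inc(z)`. -/
def incP {G A : Type*} [Group G] [CommGroup A] (z : NormalizedTwoCocycle G A) :
    Inc z →* G where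
  toFun x := x.g
  map_one' := rfl
  map_mul' x y := rfl

/-!
Since `i(A)` is central, products `s(g)·i(a)` multiply exactly as in `Inc(z)`:
`s(g₁)i(a₁)·s(g₂)i(a₂) = s(g₁)s(g₂)·i(a₁a₂) = s(g₁g₂)·i(a₁a₂·z(g₁,g₂))`,
the last step being the defining relation of `z`. The resulting homomorphism restricts to `i`
on `A` because `s(1) = 1`, and lies over `G` because `s` is a section and `i(A) ⊆ ker p`.
-/

theorem IsCentralExtension.comp_eq_one {A E G : Type*} [CommGroup A] [Group E] [Group G]
    (i : A →* E) (p : E →* G) [IsCentralExtension i p] : p.comp i = 1 := by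
  ext a
  exact MonoidHom.mem_ker.mp ((IsCentralExtension.ker_eq_range (i := i) (p := p)).ge ⟨a, rfl⟩)

namespace Inc

variable {G A E : Type*} [Group G] [CommGroup A] [Group E] {z : NormalizedTwoCocycle G A}
  {i : A →* E} {s : G → E}

theorem cocycle_mul_section
    (hz : ∀ g₁ g₂ : G, i (z.z g₁ g₂) = s g₁ * s g₂ * (s (g₁ * g₂))⁻¹) (g₁ g₂ : G) :
    i (z.z g₁ g₂) * s (g₁ * g₂) = s g₁ * s g₂ := by
  rw [hz, inv_mul_cancel_right]

def liftOfSection (hi : ∀ a : A, i a ∈ Subgroup.center E) (hs1 : s 1 = 1)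
    (hz : ∀ g₁ g₂ : G, i (z.z g₁ g₂) = s g₁ * s g₂ * (s (g₁ * g₂))⁻¹) : Inc z →* E where
  toFun x := s x.g * i x.a
  map_one' := by
    show s 1 * i 1 = 1
    rw [hs1, map_one, mul_one]
  map_mul' x y := by
    have hc (a : A) (e : E) : e * i a = i a * e := Subgroup.mem_center_iff.mp (hi a) e
    show s (x.g * y.g) * i (x.a * y.a * z.z x.g y.g) = s x.g * i x.a * (s y.g * i y.a)
    calc s (x.g * y.g) * i (x.a * y.a * z.z x.g y.g)
        = s (x.g * y.g) * i (z.z x.g y.g) * (i x.a * i y.a) := by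
          rw [mul_comm _ (z.z x.g y.g), map_mul, map_mul, mul_assoc]
      _ = s x.g * s y.g * (i x.a * i y.a) := by
          rw [hc, cocycle_mul_section hz]
      _ = s x.g * (s y.g * i x.a) * i y.a := by group
      _ = s x.g * i x.a * (s y.g * i y.a) := by
          rw [hc x.a (s y.g)]; group

theorem liftOfSection_comp_incI (hi : ∀ a : A, i a ∈ Subgroup.center E) (hs1 : s 1 = 1)
    (hz : ∀ g₁ g₂ : G, i (z.z g₁ g₂) = s g₁ * s g₂ * (s (g₁ * g₂))⁻¹) :
    (liftOfSection hi hs1 hz).comp (incI z) = i := by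
  ext a
  show s 1 * i a = i a
  rw [hs1, one_mul]

theorem comp_liftOfSection (hi : ∀ a : A, i a ∈ Subgroup.center E) (hs1 : s 1 = 1)
    (hz : ∀ g₁ g₂ : G, i (z.z g₁ g₂) = s g₁ * s g₂ * (s (g₁ * g₂))⁻¹)
    {p : E →* G} (hpi : p.comp i = 1) (hs : ∀ g : G, p (s g) = g) :
    p.comp (liftOfSection hi hs1 hz) = incP z := by
  ext x
  show p (s x.g * i x.a) = x.g
  rw [map_mul, ← p.comp_apply, hpi, MonoidHom.one_apply, mul_one, hs]

end Inc

/-- for a central extension `(E,i,p)` of `G` by `A`, a section `s : G → E` of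
`p` with `s(1) = 1`, and the normalized 2-cocycle `z` determined by
`i(z(g₁,g₂)) = s(g₁)s(g₂)s(g₁g₂)⁻¹`, the map `(g,a) ↦ s(g)·i(a)` is an equivalence of
central extensions from `Inc(z)` to `E`.  In particular, every central extension of `G`
by `A` is equivalent to `Inc(z')` for some normalized 2-cocycle `z'`. -/
theorem inc_equiv_of_section {G A E : Type*} [Group G] [CommGroup A] [Group E]
    (i : A →* E) (p : E →* G) [IsCentralExtension i p]
    (s : G → E) (hs : ∀ g : G, p (s g) = g) (hs1 : s 1 = 1)
    (z : NormalizedTwoCocycle G A)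
    (hz : ∀ g₁ g₂ : G, i (z.z g₁ g₂) = s g₁ * s g₂ * (s (g₁ * g₂))⁻¹) :
    (∃ φ : Inc z →* E, (∀ x : Inc z, φ x = s x.g * i x.a) ∧
      φ.comp (incI z) = i ∧ p.comp φ = incP z) ∧
    ∃ (z' : NormalizedTwoCocycle G A) (φ : Inc z' →* E),
      φ.comp (incI z') = i ∧ p.comp φ = incP z' := by
  have hi : ∀ a : A, i a ∈ Subgroup.center E := IsCentralExtension.mem_center (p := p)
  have hφi := Inc.liftOfSection_comp_incI hi hs1 hz
  have hpφ := Inc.comp_liftOfSection hi hs1 hz (IsCentralExtension.comp_eq_one i p) hs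
  exact ⟨⟨_, fun _ => rfl, hφi, hpφ⟩, z, _, hφi, hpφ⟩
end

section
/- Let k be a field, kˣ its multiplicative group, and A a commutative group. Let c : kˣ × kˣ → A be a bimultiplicative map satisfying c(s, 1-s) = 1 for all s ∈ kˣ with s ≠ 1. Then c is skew-symmetric: c(s,t)·c(t,s) = 1 for all s, t ∈ kˣ. -/
/-!
Bimultiplicativity and the Steinberg relation give `c(s, -s) = 1`, because
`-s · (1 - s⁻¹) = 1 - s` and `c(s, 1 - s⁻¹) = c(s⁻¹, 1 - s⁻¹)⁻¹ = 1`.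
Skew-symmetry then follows by expanding `1 = c(st, -st) = c(s, (-s)t) · c(t, s(-t))`.
-/

namespace MonoidHom

theorem apply_mul_apply_swap_eq_one_of_apply_neg_self {M A : Type*} [Monoid M]
    [HasDistribNeg M] [CommMonoid A] (c : M →* M →* A) (hneg : ∀ s, c s (-s) = 1)
    (s t : M) : c s t * c t s = 1 := by
  have hs : c s (-(s * t)) = c s t := by
    rw [← neg_mul, map_mul, hneg, one_mul]
  have ht : c t (-(s * t)) = c t s := by
    rw [← mul_neg, map_mul, hneg, mul_one]
  rw [← hs, ← ht, ← mul_apply, ← map_mul, hneg]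

theorem apply_self_neg_eq_one_of_steinberg {k A : Type*} [DivisionRing k] [CommMonoid A]
    (c : kˣ →* kˣ →* A) (hst : ∀ s u : kˣ, (s : k) + u = 1 → c s u = 1) (s : kˣ) :
    c s (-s) = 1 := by
  rcases eq_or_ne s 1 with rfl | hs
  · rw [map_one, one_apply]
  have hs' : s⁻¹ ≠ 1 := inv_ne_one.2 hs
  let u : kˣ := Units.mk0 (1 - (s : k)) (sub_ne_zero.2 (Ne.symm (Units.val_eq_one.not.2 hs)))
  let v : kˣ :=
    Units.mk0 (1 - ((s⁻¹ : kˣ) : k)) (sub_ne_zero.2 (Ne.symm (Units.val_eq_one.not.2 hs')))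
  have hu : c s u = 1 := hst s u (add_sub_cancel _ _)
  have hv : c s v = 1 := by
    calc c s v = c s v * c s⁻¹ v := by rw [hst s⁻¹ v (add_sub_cancel _ _), mul_one]
      _ = 1 := by rw [← mul_apply, ← map_mul, mul_inv_cancel, map_one, one_apply]
  have hsu : -s * v = u := by
    ext
    simp only [u, v, Units.val_mul, Units.val_neg, Units.val_mk0, mul_sub, neg_mul, mul_one,
      Units.mul_inv]
    abel
  calc c s (-s) = c s (-s) * c s v := by rw [hv, mul_one]
    _ = 1 := by rw [← map_mul, hsu, hu]

end MonoidHom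

/-- if `c : kˣ × kˣ → A` is bimultiplicative and satisfies the Steinberg
relation `c(s, 1-s) = 1` for all `s ≠ 1`, then `c` is skew-symmetric:
`c(s,t)·c(t,s) = 1` for all `s, t ∈ kˣ`. -/
theorem steinberg_symbol_skew_symmetric {k A : Type*} [Field k] [CommGroup A]
    (c : kˣ × kˣ → A)
    (hmul_left : ∀ r s t : kˣ, c (r * s, t) = c (r, t) * c (s, t))
    (hmul_right : ∀ r s t : kˣ, c (r, s * t) = c (r, s) * c (r, t))
    (hst : ∀ (s : kˣ) (hs : (s : k) ≠ 1),
      c (s, Units.mk0 (1 - (s : k)) (sub_ne_zero_of_ne (Ne.symm hs))) = 1) :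
    ∀ s t : kˣ, c (s, t) * c (t, s) = 1 := by
  let B : kˣ →* kˣ →* A :=
    MonoidHom.mk' (fun s => MonoidHom.mk' (fun t => c (s, t)) (hmul_right s))
      fun r s => MonoidHom.ext (hmul_left r s)
  have hB : ∀ s u : kˣ, (s : k) + u = 1 → B s u = 1 := by
    intro s u hsu
    have hs : (s : k) ≠ 1 := fun h => u.ne_zero (by rw [h] at hsu; exact left_eq_add.1 hsu.symm)
    obtain rfl : u = Units.mk0 (1 - (s : k)) (sub_ne_zero_of_ne (Ne.symm hs)) :=
      Units.ext (eq_sub_of_add_eq' hsu)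
    exact hst s hs
  exact B.apply_mul_apply_swap_eq_one_of_apply_neg_self
    (B.apply_self_neg_eq_one_of_steinberg hB)
end

section
/- (Redundancy in the relations of Theorem 2.6, Moore.) Let k be a field, kˣ its multiplicative group, A a commutative group, and b : kˣ × kˣ → A a function satisfying relation (1): b(st,r)·b(s,t) = b(s,tr)·b(t,r) and b(s,1) = b(1,s) = 1 for all r,s,t ∈ kˣ, and relation (4): b(s,t) = b(s,(1-s)t) for all s,t ∈ kˣ with s ≠ 1. Then relation (2): b(s,t) = b(t⁻¹,s) for all s,t ∈ kˣ, holds if and only if relation (3): b(s,t) = b(s,-st) for all s,t ∈ kˣ, holds. -/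
/-! Relation (3) turns the cocycle identity (1), read at `(s, t, r)` equal to `(s⁻¹t⁻¹, s, t)`,
`(s⁻¹, t⁻¹, s)` and `(s⁻¹, t⁻¹, -1)`, into three identities among seven values of `b`, from
which `b(s,t) = b(t⁻¹,s)` follows by cancellation. Conversely, applying relation (2) twice
gives `b(s,t) = b(s⁻¹,t⁻¹)`; using relation (4) at `s⁻¹` and then at `s` multiplies the
second argument by `(1 - s)(1 - s⁻¹)⁻¹ = -s`. -/

namespace SteinbergCocycle

section RelationTwoOfThree

variable {G A : Type*} [CommGroup G] [HasDistribNeg G] [CommGroup A] {b : G × G → A}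

theorem relation_two_of_relation_three
    (h1 : ∀ r s t : G, b (s * t, r) * b (s, t) = b (s, t * r) * b (t, r))
    (h3 : ∀ s t : G, b (s, t) = b (s, -(s * t))) (s t : G) :
    b (s, t) = b (t⁻¹, s) := by
  have h3_of_mul_eq {x y z : G} (h : x * y = z) : b (x, y) = b (x, -z) := h ▸ h3 x y
  have c1 : b (t⁻¹, -1) * b (s⁻¹ * t⁻¹, s) = b (s⁻¹ * t⁻¹, -1) * b (s, t) := by
    have := h1 t (s⁻¹ * t⁻¹) s
    rwa [mul_right_comm s⁻¹, inv_mul_cancel, one_mul, h3_of_mul_eq (inv_mul_cancel t),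
      h3_of_mul_eq (x := s⁻¹ * t⁻¹) (y := s * t)
        (by rw [mul_mul_mul_comm, inv_mul_cancel, inv_mul_cancel, one_mul])] at this
  have c2 : b (s⁻¹ * t⁻¹, s) * b (s⁻¹, t⁻¹) = b (s⁻¹, -t⁻¹) * b (t⁻¹, s) := by
    have := h1 s s⁻¹ t⁻¹
    rwa [h3_of_mul_eq (x := s⁻¹) (y := t⁻¹ * s)
      (by rw [mul_left_comm, inv_mul_cancel, mul_one])] at this
  have c3 : b (s⁻¹ * t⁻¹, -1) * b (s⁻¹, t⁻¹) = b (s⁻¹, -t⁻¹) * b (t⁻¹, -1) := by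
    simpa using h1 (-1) s⁻¹ t⁻¹
  refine mul_left_cancel (a := b (s⁻¹ * t⁻¹, -1) * b (s⁻¹, t⁻¹)) ?_
  calc b (s⁻¹ * t⁻¹, -1) * b (s⁻¹, t⁻¹) * b (s, t)
      = b (s⁻¹, t⁻¹) * (b (t⁻¹, -1) * b (s⁻¹ * t⁻¹, s)) := by rw [c1]; ac_rfl
    _ = b (t⁻¹, -1) * (b (s⁻¹, -t⁻¹) * b (t⁻¹, s)) := by rw [← c2]; ac_rfl
    _ = b (s⁻¹ * t⁻¹, -1) * b (s⁻¹, t⁻¹) * b (t⁻¹, s) := by rw [c3]; ac_rfl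

end RelationTwoOfThree

section RelationThreeOfTwo

variable {k A : Type*} [Field k] {b : kˣ × kˣ → A}

theorem apply_eq_apply_mul_of_val_eq_one_sub
    (h4 : ∀ (s t : kˣ) (hs : (s : k) ≠ 1),
      b (s, t) = b (s, Units.mk0 (1 - (s : k)) (sub_ne_zero_of_ne (Ne.symm hs)) * t))
    {s u : kˣ} (hu : (u : k) = 1 - s) (t : kˣ) :
    b (s, t) = b (s, u * t) := by
  have hs : (s : k) ≠ 1 := fun hs ↦ u.ne_zero (by rw [hu, hs, sub_self])
  rw [h4 s t hs]
  congr 3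
  ext
  simp [hu]

theorem relation_three_of_relation_two [One A]
    (h1left : ∀ s : kˣ, b (1, s) = 1)
    (h4 : ∀ (s t : kˣ) (hs : (s : k) ≠ 1),
      b (s, t) = b (s, Units.mk0 (1 - (s : k)) (sub_ne_zero_of_ne (Ne.symm hs)) * t))
    (h2 : ∀ s t : kˣ, b (s, t) = b (t⁻¹, s)) (s t : kˣ) :
    b (s, t) = b (s, -(s * t)) := by
  obtain rfl | hs := eq_or_ne s 1
  · rw [h1left, h1left]
  have hinv (x y : kˣ) : b (x, y) = b (x⁻¹, y⁻¹) := (h2 x y).trans (h2 y⁻¹ x)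
  have hs' : (1 : k) - (s⁻¹ : kˣ) ≠ 0 := by
    rwa [sub_ne_zero, ne_comm, Ne, Units.val_eq_one, inv_eq_one]
  set u := Units.mk0 _ hs'
  have hu : ((-s * u : kˣ) : k) = 1 - s := by
    simp [u, mul_sub]
  calc b (s, t) = b (s⁻¹, u * t⁻¹) :=
        (hinv s t).trans (apply_eq_apply_mul_of_val_eq_one_sub h4 (Units.val_mk0 hs') _)
    _ = b (s, u⁻¹ * t) := by rw [hinv, inv_inv, mul_inv, inv_inv, mul_comm]
    _ = b (s, -s * u * (u⁻¹ * t)) := apply_eq_apply_mul_of_val_eq_one_sub h4 hu _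
    _ = b (s, -(s * t)) := by rw [mul_assoc, mul_inv_cancel_left, neg_mul]

end RelationThreeOfTwo

end SteinbergCocycle

open SteinbergCocycle in
theorem steinberg_cocycle_relations_two_iff_three_general {k A : Type*} [Field k] [CommGroup A]
    (b : kˣ × kˣ → A)
    (h1 : ∀ r s t : kˣ, b (s * t, r) * b (s, t) = b (s, t * r) * b (t, r))
    (h1left : ∀ s : kˣ, b (1, s) = 1)
    (h4 : ∀ (s t : kˣ) (hs : (s : k) ≠ 1),
      b (s, t) = b (s, Units.mk0 (1 - (s : k)) (sub_ne_zero_of_ne (Ne.symm hs)) * t)) :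
    (∀ s t : kˣ, b (s, t) = b (t⁻¹, s)) ↔ (∀ s t : kˣ, b (s, t) = b (s, -(s * t))) :=
  ⟨relation_three_of_relation_two h1left h4, relation_two_of_relation_three h1⟩

/-- redundancy in the relations of Theorem 2.6, Moore: if
`b : kˣ × kˣ → A` satisfies relation (1) (the normalized cocycle identities) and
relation (4) (`b(s,t) = b(s,(1-s)t)` for `s ≠ 1`), then relation (2)
(`b(s,t) = b(t⁻¹,s)`) holds if and only if relation (3) (`b(s,t) = b(s,-st)`) holds. -/
theorem steinberg_cocycle_relations_two_iff_three {k A : Type*} [Field k] [CommGroup A]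
    (b : kˣ × kˣ → A)
    (h1 : ∀ r s t : kˣ, b (s * t, r) * b (s, t) = b (s, t * r) * b (t, r))
    (h1right : ∀ s : kˣ, b (s, 1) = 1)
    (h1left : ∀ s : kˣ, b (1, s) = 1)
    (h4 : ∀ (s t : kˣ) (hs : (s : k) ≠ 1),
      b (s, t) = b (s, Units.mk0 (1 - (s : k)) (sub_ne_zero_of_ne (Ne.symm hs)) * t)) :
    (∀ s t : kˣ, b (s, t) = b (t⁻¹, s)) ↔ (∀ s t : kˣ, b (s, t) = b (s, -(s * t))) :=
  steinberg_cocycle_relations_two_iff_three_general b h1 h1left h4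
end

section
/- Let k be a field, kˣ its multiplicative group, and A a commutative group. Every bimultiplicative map c : kˣ × kˣ → A satisfying c(s,1-s) = 1 for all s ∈ kˣ with s ≠ 1 is an A-valued Steinberg cocycle on kˣ; that is, it satisfies all four relations: (1) c(st,r)·c(s,t) = c(s,tr)·c(t,r) and c(s,1) = c(1,s) = 1 for all r,s,t ∈ kˣ; (2) c(s,t) = c(t⁻¹,s) for all s,t ∈ kˣ; (3) c(s,t) = c(s,-st) for all s,t ∈ kˣ; (4) c(s,t) = c(s,(1-s)t) for all s,t ∈ kˣ with s ≠ 1. (Thus St°(kˣ,A) ⊆ St(kˣ,A).) -/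
/-! Bimultiplicativity alone gives the cocycle identity (1) and normalisation. The Steinberg
relation applied to `s` and to `s⁻¹`, together with `-s = (1 - s) / (1 - s⁻¹)`, gives
`c (s, -s) = 1`; expanding `c (s * t, -(s * t)) = 1` then yields skew-symmetry
`c (s, t) * c (t, s) = 1`, from which (2) and (3) follow, while (4) is the Steinberg relation
itself. -/

namespace Bimultiplicative

variable {G A : Type*} [CommGroup A] {c : G × G → A}

theorem one_left [Group G] (hl : ∀ r s t : G, c (r * s, t) = c (r, t) * c (s, t)) (s : G) :
    c (1, s) = 1 :=
  (MonoidHom.mk' (fun r => c (r, s)) (hl · · s)).map_one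

theorem one_right [Group G] (hr : ∀ r s t : G, c (r, s * t) = c (r, s) * c (r, t)) (s : G) :
    c (s, 1) = 1 :=
  (MonoidHom.mk' (fun t => c (s, t)) (hr s)).map_one

theorem inv_left [Group G] (hl : ∀ r s t : G, c (r * s, t) = c (r, t) * c (s, t)) (s t : G) :
    c (s⁻¹, t) = (c (s, t))⁻¹ :=
  (MonoidHom.mk' (fun r => c (r, t)) (hl · · t)).map_inv s

theorem inv_right [Group G] (hr : ∀ r s t : G, c (r, s * t) = c (r, s) * c (r, t)) (s t : G) :
    c (s, t⁻¹) = (c (s, t))⁻¹ :=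
  (MonoidHom.mk' (fun t => c (s, t)) (hr s)).map_inv t

theorem cocycle [Mul G] (hl : ∀ r s t : G, c (r * s, t) = c (r, t) * c (s, t))
    (hr : ∀ r s t : G, c (r, s * t) = c (r, s) * c (r, t)) (r s t : G) :
    c (s * t, r) * c (s, t) = c (s, t * r) * c (t, r) := by
  rw [hl, hr]
  exact (mul_rotate _ _ _).symm

theorem apply_neg_mul [Mul G] [HasDistribNeg G]
    (hr : ∀ r s t : G, c (r, s * t) = c (r, s) * c (r, t)) (hneg : ∀ s : G, c (s, -s) = 1)
    (s t : G) : c (s, -(s * t)) = c (s, t) := by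
  rw [← neg_mul, hr, hneg, one_mul]

theorem mul_swap_eq_one [Mul G] [HasDistribNeg G]
    (hl : ∀ r s t : G, c (r * s, t) = c (r, t) * c (s, t))
    (hr : ∀ r s t : G, c (r, s * t) = c (r, s) * c (r, t)) (hneg : ∀ s : G, c (s, -s) = 1)
    (s t : G) : c (s, t) * c (t, s) = 1 := by
  have hts : c (t, -(s * t)) = c (t, s) := by
    rw [← mul_neg, hr, hneg, mul_one]
  rw [← hneg (s * t), hl, apply_neg_mul hr hneg, hts]

theorem inv_swap [Group G] [HasDistribNeg G]
    (hl : ∀ r s t : G, c (r * s, t) = c (r, t) * c (s, t))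
    (hr : ∀ r s t : G, c (r, s * t) = c (r, s) * c (r, t)) (hneg : ∀ s : G, c (s, -s) = 1)
    (s t : G) : c (s, t) = c (t⁻¹, s) := by
  rw [inv_left hl]
  exact eq_inv_of_mul_eq_one_left (mul_swap_eq_one hl hr hneg s t)

end Bimultiplicative

theorem one_sub_div_one_sub_inv {k : Type*} [Field k] {s : k} (hs0 : s ≠ 0) (hs1 : s ≠ 1) :
    (1 - s) / (1 - s⁻¹) = -s := by
  have : s - 1 ≠ 0 := sub_ne_zero_of_ne hs1
  field_simp
  ring

open Bimultiplicative in
theorem steinberg_apply_neg_self {k A : Type*} [Field k] [CommGroup A] {c : kˣ × kˣ → A}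
    (hl : ∀ r s t : kˣ, c (r * s, t) = c (r, t) * c (s, t))
    (hr : ∀ r s t : kˣ, c (r, s * t) = c (r, s) * c (r, t))
    (hst : ∀ (s : kˣ) (hs : (s : k) ≠ 1),
      c (s, Units.mk0 (1 - (s : k)) (sub_ne_zero_of_ne (Ne.symm hs))) = 1)
    (s : kˣ) : c (s, -s) = 1 := by
  by_cases hs : (s : k) = 1
  · rw [Units.val_eq_one.mp hs]
    exact one_left hl _
  have hs' : ((s⁻¹ : kˣ) : k) ≠ 1 := by simpa using hs
  have hneg : -s = Units.mk0 (1 - (s : k)) (sub_ne_zero_of_ne (Ne.symm hs))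
      * (Units.mk0 (1 - ((s⁻¹ : kˣ) : k)) (sub_ne_zero_of_ne (Ne.symm hs')))⁻¹ := by
    ext
    simp [← div_eq_mul_inv, one_sub_div_one_sub_inv s.ne_zero hs]
  rw [hneg, hr, hst s hs, inv_right hr, ← inv_left hl, hst s⁻¹ hs', mul_one]

open Bimultiplicative in
/-- every bimultiplicative map `c : kˣ × kˣ → A` with `c(s, 1-s) = 1` for
`s ≠ 1` is an `A`-valued Steinberg cocycle on `kˣ`: it satisfies all four relations
(1)-(4).  Thus `St°(kˣ,A) ⊆ St(kˣ,A)`. -/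
theorem bimultiplicative_steinberg_symbol_is_steinberg_cocycle {k A : Type*}
    [Field k] [CommGroup A]
    (c : kˣ × kˣ → A)
    (hmul_left : ∀ r s t : kˣ, c (r * s, t) = c (r, t) * c (s, t))
    (hmul_right : ∀ r s t : kˣ, c (r, s * t) = c (r, s) * c (r, t))
    (hst : ∀ (s : kˣ) (hs : (s : k) ≠ 1),
      c (s, Units.mk0 (1 - (s : k)) (sub_ne_zero_of_ne (Ne.symm hs))) = 1) :
    (∀ r s t : kˣ, c (s * t, r) * c (s, t) = c (s, t * r) * c (t, r)) ∧
    (∀ s : kˣ, c (s, 1) = 1) ∧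
    (∀ s : kˣ, c (1, s) = 1) ∧
    (∀ s t : kˣ, c (s, t) = c (t⁻¹, s)) ∧
    (∀ s t : kˣ, c (s, t) = c (s, -(s * t))) ∧
    (∀ (s t : kˣ) (hs : (s : k) ≠ 1),
      c (s, t) = c (s, Units.mk0 (1 - (s : k)) (sub_ne_zero_of_ne (Ne.symm hs)) * t)) := by
  have hneg := steinberg_apply_neg_self hmul_left hmul_right hst
  refine ⟨cocycle hmul_left hmul_right, one_right hmul_right, one_left hmul_left,
    inv_swap hmul_left hmul_right hneg, fun s t => (apply_neg_mul hmul_right hneg s t).symm, ?_⟩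
  intro s t hs
  rw [hmul_right, hst s hs, one_mul]
end
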